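/- The group with 8 generators a, c, g, h, q, x, u, v and relations [a,u²]=1, [h,u²]=1, [a,q]=c, [a⁻¹,c⁻¹]=q, [g,a]=h, [g⁻¹,h]=a, [q,ah]=1, [c,ah]=1, [q,c]=1, v=a⁻¹[h⁻¹,g⁻¹], xqx=qxq, [c,x]=1, g=[x,q⁻¹], qx⁻¹=uv, uv=v⁻¹u, v=[u,g⁻¹], [g,u²]=1 is the trivial group. -/

import Mathlib

def braketAP {G : Type*} [Group G] (x y : G) : G := x * y * x⁻¹ * y⁻¹

namespace Stmt7

abbrev F := FreeGroup (Fin 8)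
noncomputable def a : F := FreeGroup.of 0
noncomputable def c : F := FreeGroup.of 1
noncomputable def g : F := FreeGroup.of 2
noncomputable def h : F := FreeGroup.of 3
noncomputable def q : F := FreeGroup.of 4
noncomputable def x : F := FreeGroup.of 5
noncomputable def u : F := FreeGroup.of 6
noncomputable def v : F := FreeGroup.of 7

/-- The full presentation of π₁(N). -/
noncomputable def rels : Set F :=
  { braketAP a (u ^ 2),
    braketAP h (u ^ 2),
    braketAP a q * c⁻¹,
    braketAP a⁻¹ c⁻¹ * q⁻¹,
    braketAP g a * h⁻¹,
    braketAP g⁻¹ h * a⁻¹,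
    braketAP q (a * h),
    braketAP c (a * h),
    braketAP q c,
    v * (a⁻¹ * braketAP h⁻¹ g⁻¹)⁻¹,
    x * q * x * (q * x * q)⁻¹,
    braketAP c x,
    g * (braketAP x q⁻¹)⁻¹,
    q * x⁻¹ * (u * v)⁻¹,
    u * v * (v⁻¹ * u)⁻¹,
    v * (braketAP u g⁻¹)⁻¹,
    braketAP g (u ^ 2) }

end Stmt7

/-!
Write `k = h a`. The relation `[g, a] = h` says `g a = k g`, so conjugating `a z a⁻¹` by `g` is the
same as conjugating `g z g⁻¹` by `k`. Since `a c a⁻¹ = c² q` and `a h` commutes with `c` and `q`, the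
conjugate `k = a⁻¹ (a h) a` commutes with `c`; and `g = [x, q⁻¹]` commutes with `c`.
Taking `z = c` gives `c² · g q g⁻¹ = c`, i.e. `g q g⁻¹ = c⁻¹`, and then `z = q` (with `a q a⁻¹ = c q`)
gives `1 = c⁻¹`. Once `c = 1` the remaining relations kill `q`, `g`, `h`, `a`, `x`, `v`, `u` in turn.
-/

open scoped commutatorElement

section Commutator

variable {G : Type*} [Group G]

theorem braketAP_eq_commutatorElement (x y : G) : braketAP x y = ⁅x, y⁆ := rfl

theorem commutatorElement_eq_iff_conj_eq_mul {x y z : G} : ⁅x, y⁆ = z ↔ x * y * x⁻¹ = z * y := by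
  rw [commutatorElement_def, mul_inv_eq_iff_eq_mul]

theorem Commute.commutatorElement_right {z x y : G} (hx : Commute z x) (hy : Commute z y) :
    Commute z ⁅x, y⁆ :=
  ((hx.mul_right hy).mul_right hx.inv_right).mul_right hy.inv_right

theorem Commute.mul_rev_of_conj {a h z : G} (hz : Commute (a * h) (a * z * a⁻¹)) :
    Commute (h * a) z := by
  rw [← Commute.conj_iff a]
  simpa only [mul_assoc, mul_inv_cancel, mul_one] using hz

theorem conj_eq_of_commutatorElement_eq {a c q : G} (haq : ⁅a, q⁆ = c) (hac : ⁅a⁻¹, c⁻¹⁆ = q) :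
    a * c * a⁻¹ = c * (c * q) :=
  calc a * c * a⁻¹ = c * (a * ⁅a⁻¹, c⁻¹⁆ * a⁻¹) := by rw [commutatorElement_def]; group
    _ = c * (c * q) := by rw [hac, commutatorElement_eq_iff_conj_eq_mul.1 haq]

theorem eq_one_of_conj_relations {a c g h q : G} (haq : a * q * a⁻¹ = c * q)
    (hac : a * c * a⁻¹ = c * (c * q)) (hga : g * a * g⁻¹ = h * a) (hgc : Commute g c)
    (hq : Commute (a * h) q) (hc : Commute (a * h) c) : c = 1 := by
  have hconj (z : G) : g * (a * z * a⁻¹) * g⁻¹ = h * a * (g * z * g⁻¹) * (h * a)⁻¹ := by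
    rw [← hga]; group
  have hkc : Commute (h * a) c := .mul_rev_of_conj (hac ▸ hc.mul_right (hc.mul_right hq))
  have hgq : g * q * g⁻¹ = c⁻¹ := by
    have hcc := hconj c
    rw [hac, hgc.mul_inv_cancel, hkc.mul_inv_cancel] at hcc
    calc g * q * g⁻¹ = (g * c * g⁻¹)⁻¹ * (g * c * g⁻¹)⁻¹ * (g * (c * (c * q)) * g⁻¹) := by group
      _ = c⁻¹ := by rw [hgc.mul_inv_cancel, hcc]; group
  have hcq := hconj q
  rw [haq, hgq, hkc.inv_right.mul_inv_cancel] at hcq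
  calc c = g * c * g⁻¹ := hgc.mul_inv_cancel.symm
    _ = g * (c * q) * g⁻¹ * (g * q * g⁻¹)⁻¹ := by group
    _ = 1 := by rw [hcq, hgq]; group

theorem eq_one_of_akhmedovPark_relations {a c g h q x u v : G}
    (haq : ⁅a, q⁆ = c) (hac : ⁅a⁻¹, c⁻¹⁆ = q) (hga : ⁅g, a⁆ = h) (hgh : ⁅g⁻¹, h⁆ = a)
    (hq : ⁅q, a * h⁆ = 1) (hc : ⁅c, a * h⁆ = 1) (hqc : ⁅q, c⁆ = 1) (hv : v = a⁻¹ * ⁅h⁻¹, g⁻¹⁆)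
    (hxq : x * q * x = q * x * q) (hcx : ⁅c, x⁆ = 1) (hg : g = ⁅x, q⁻¹⁆)
    (huv : q * x⁻¹ = u * v) :
    a = 1 ∧ c = 1 ∧ g = 1 ∧ h = 1 ∧ q = 1 ∧ x = 1 ∧ u = 1 ∧ v = 1 := by
  simp only [commutatorElement_eq_one_iff_commute] at hq hc hqc hcx
  have hgc : Commute g c := hg ▸ (hcx.commutatorElement_right hqc.symm.inv_right).symm
  obtain rfl : c = 1 := eq_one_of_conj_relations (commutatorElement_eq_iff_conj_eq_mul.1 haq)
    (conj_eq_of_commutatorElement_eq haq hac) (commutatorElement_eq_iff_conj_eq_mul.1 hga) hgc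
    hq.symm hc.symm
  obtain rfl : q = 1 := by simpa using hac.symm
  obtain rfl : g = 1 := by simpa using hg
  obtain rfl : h = 1 := by simpa using hga.symm
  obtain rfl : a = 1 := by simpa using hgh.symm
  obtain rfl : x = 1 := by simpa using hxq
  obtain rfl : v = 1 := by simpa using hv
  obtain rfl : u = 1 := by simpa using huv.symm
  simp

end Commutator

theorem stmt7 : ∀ z : PresentedGroup Stmt7.rels, z = 1 := by
  open Stmt7 PresentedGroup in
  have key := eq_one_of_akhmedovPark_relations
    (a := mk rels a) (c := mk rels c) (g := mk rels g) (h := mk rels h) (q := mk rels q)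
    (x := mk rels x) (u := mk rels u) (v := mk rels v)
    ?_ ?_ ?_ ?_ ?_ ?_ ?_ ?_ ?_ ?_ ?_ ?_
  · obtain ⟨ha, hc, hg, hh, hq, hx, hu, hv⟩ := key
    have hof (i : Fin 8) : (of i : PresentedGroup rels) = 1 := by fin_cases i <;> assumption
    exact fun z => Subgroup.mem_bot.1 (generated_by rels ⊥ (fun i => Subgroup.mem_bot.2 (hof i)) z)
  all_goals simp only [← map_commutatorElement, ← map_inv, ← map_mul]
  all_goals first
    | exact one_of_mem (by simp [rels, braketAP_eq_commutatorElement])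
    | exact mk_eq_mk_of_mul_inv_mem (by simp [rels, braketAP_eq_commutatorElement])
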